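/- For every pair of nominal terms t, u and freshness environment ∇: ∇ ⊢ t ≈ u is derivable in the nominal α-equivalence theory if and only if the translated λ-terms ⟦t⟧_∇ and ⟦u⟧_∇ are α-equivalent. -/

import Mathlib

set_option linter.unreachableTactic false
set_option linter.unusedTactic false

/-! Nominal terms -/

abbrev Atom := ℕ
abbrev Var := ℕ

/-- The swapping `(a b)` acting on atoms. -/
def swapAtom (a b c : Atom) : Atom := if c = a then b else if c = b then a else c

/-- A permutation presented as a finite list of swappings. -/
abbrev Perm0 := List (Atom × Atom)

/-- Action of a list of swappings: `(a₁ b₁)…(aₙ bₙ)·c = (a₁ b₁)·(…·((aₙ bₙ)·c))`. -/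
def permAtom (π : Perm0) (c : Atom) : Atom := π.foldr (fun p d => swapAtom p.1 p.2 d) c

/-- Nominal terms. -/
inductive NTerm where
  | atom : Atom → NTerm
  | app  : ℕ → List NTerm → NTerm
  | abs  : Atom → NTerm → NTerm
  | susp : Perm0 → Var → NTerm

/-- Action of a permutation (list of swappings) on a nominal term. -/
def permTerm (π : Perm0) : NTerm → NTerm
  | .atom a => .atom (permAtom π a)
  | .app f ts => .app f (ts.attach.map (fun t => permTerm π t.1))
  | .abs a t => .abs (permAtom π a) (permTerm π t)
  | .susp π' X => .susp (π ++ π') X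
decreasing_by
  all_goals simp_wf
  all_goals first
    | (have := List.sizeOf_lt_of_mem t.2; omega)
    | omega

/-- Action of a single swapping on a nominal term. -/
def swapTerm (a b : Atom) (t : NTerm) : NTerm := permTerm [(a, b)] t

/-- Variables of a nominal term. -/
def nvars : NTerm → Finset Var
  | .atom _ => ∅
  | .app _ ts => ts.attach.foldr (fun t s => nvars t.1 ∪ s) ∅
  | .abs _ t => nvars t
  | .susp _ X => {X}
decreasing_by
  all_goals simp_wf
  all_goals first
    | (have := List.sizeOf_lt_of_mem t.2; omega)
    | omega

/-- Atoms of a nominal term (including those in suspended permutations). -/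
def natoms : NTerm → Finset Atom
  | .atom a => {a}
  | .app _ ts => ts.attach.foldr (fun t s => natoms t.1 ∪ s) ∅
  | .abs a t => insert a (natoms t)
  | .susp π _ => π.foldr (fun p s => insert p.1 (insert p.2 s)) ∅
decreasing_by
  all_goals simp_wf
  all_goals first
    | (have := List.sizeOf_lt_of_mem t.2; omega)
    | omega

/-- Size of a nominal term. -/
def sizeN : NTerm → ℕ
  | .atom _ => 1
  | .app _ ts => 1 + (ts.attach.map (fun t => sizeN t.1)).sum
  | .abs _ t => 1 + sizeN t
  | .susp π _ => 1 + π.length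
decreasing_by
  all_goals simp_wf
  all_goals first
    | (have := List.sizeOf_lt_of_mem t.2; omega)
    | omega

/-! Freshness and α-equivalence for nominal terms -/

/-- The freshness judgement `Δ ⊢ a # t`. -/
inductive Fresh (Δ : Finset (Atom × Var)) : Atom → NTerm → Prop
  | atom {a a'} : a ≠ a' → Fresh Δ a (.atom a')
  | susp {a π X} : (permAtom π.reverse a, X) ∈ Δ → Fresh Δ a (.susp π X)
  | app {a f ts} : (∀ t ∈ ts, Fresh Δ a t) → Fresh Δ a (.app f ts)
  | abs1 {a t} : Fresh Δ a (.abs a t)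
  | abs2 {a a' t} : a ≠ a' → Fresh Δ a t → Fresh Δ a (.abs a' t)

/-- The α-equivalence judgement `Δ ⊢ t ≈ u`. -/
inductive Alpha (Δ : Finset (Atom × Var)) : NTerm → NTerm → Prop
  | atom (a) : Alpha Δ (.atom a) (.atom a)
  | susp {π π' X} : (∀ a, permAtom π a ≠ permAtom π' a → (a, X) ∈ Δ) →
      Alpha Δ (.susp π X) (.susp π' X)
  | app {f ts us} : ts.length = us.length →
      (∀ p ∈ ts.zip us, Alpha Δ p.1 p.2) → Alpha Δ (.app f ts) (.app f us)
  | abs1 {a t u} : Alpha Δ t u → Alpha Δ (.abs a t) (.abs a u)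
  | abs2 {a b t u} : a ≠ b → Alpha Δ t (swapTerm a b u) → Fresh Δ a u →
      Alpha Δ (.abs a t) (.abs b u)

/-- Nominal substitutions (partial, with explicit domain). -/
abbrev NSub := Var → Option NTerm

/-- Domain of a nominal substitution. -/
def domN (σ : NSub) : Set Var := {X | (σ X).isSome}

/-- Application of a nominal substitution (capturing; suspended permutations are applied). -/
def applyN (σ : NSub) : NTerm → NTerm
  | .atom a => .atom a
  | .app f ts => .app f (ts.attach.map (fun t => applyN σ t.1))
  | .abs a t => .abs a (applyN σ t)
  | .susp π X =>
      match σ X with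
      | some u => permTerm π u
      | none => .susp π X
decreasing_by
  all_goals simp_wf
  all_goals first
    | (have := List.sizeOf_lt_of_mem t.2; omega)
    | omega

/-- The trivial suspension of a variable. -/
def nsuspV (X : Var) : NTerm := .susp [] X

/-! λ-terms -/

/-- λ-calculus variables: either (the image of) an atom or (the image of) a nominal variable. -/
abbrev LVar := Atom ⊕ Var

/-- Untyped λ-terms with constants. -/
inductive LTerm where
  | var : LVar → LTerm
  | const : ℕ → LTerm
  | lam : LVar → LTerm → LTerm
  | app : LTerm → LTerm → LTerm
deriving DecidableEq

/-- Iterated application `h(t₁,…,tₙ)`. -/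
def appList (h : LTerm) (ts : List LTerm) : LTerm := ts.foldl .app h

/-- Iterated abstraction `λx₁…λxₙ.t`. -/
def lamList (xs : List LVar) (t : LTerm) : LTerm := xs.foldr .lam t

/-- Free variables of a λ-term. -/
def FVL : LTerm → Finset LVar
  | .var v => {v}
  | .const _ => ∅
  | .lam x t => (FVL t).erase x
  | .app t u => FVL t ∪ FVL u

/-- All variables (free, bound and binding) of a λ-term. -/
def allVarsL : LTerm → Finset LVar
  | .var v => {v}
  | .const _ => ∅
  | .lam x t => insert x (allVarsL t)
  | .app t u => allVarsL t ∪ allVarsL u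

/-- Binder variables of a λ-term. -/
def bvarsL : LTerm → Finset LVar
  | .var _ => ∅
  | .const _ => ∅
  | .lam x t => insert x (bvarsL t)
  | .app t u => bvarsL t ∪ bvarsL u

/-- Size of a λ-term. -/
def sizeL : LTerm → ℕ
  | .var _ => 1
  | .const _ => 1
  | .lam _ t => 1 + sizeL t
  | .app t u => 1 + sizeL t + sizeL u

/-- The function on variable names exchanging `x` and `y`. -/
def varMap (x y : LVar) : LVar → LVar := fun z => if z = x then y else if z = y then x else z

/-- Renaming all occurrences of variables (free, bound and binding) of a λ-term. -/
def renameAll (f : LVar → LVar) : LTerm → LTerm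
  | .var v => .var (f v)
  | .const c => .const c
  | .lam x t => .lam (f x) (renameAll f t)
  | .app t u => .app (renameAll f t) (renameAll f u)

/-- The swapping `(x y)·t` on λ-terms, exchanging `x` and `y` at every occurrence. -/
def swapL (x y : LVar) (t : LTerm) : LTerm := renameAll (varMap x y) t

theorem sizeL_renameAll (f : LVar → LVar) (t : LTerm) : sizeL (renameAll f t) = sizeL t := by
  induction t <;> simp [renameAll, sizeL, *]

/-- α-equivalence of λ-terms. -/
inductive AEq : LTerm → LTerm → Prop
  | var (v) : AEq (.var v) (.var v)
  | const (c) : AEq (.const c) (.const c)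
  | app {t t' u u'} : AEq t t' → AEq u u' → AEq (.app t u) (.app t' u')
  | lam {x y t u} (z : LVar) : z ∉ allVarsL t → z ∉ allVarsL u → z ≠ x → z ≠ y →
      AEq (swapL x z t) (swapL y z u) → AEq (.lam x t) (.lam y u)

/-- Naive (possibly capturing) substitution of `u` for the free variable `x`. -/
def nsubst (x : LVar) (u : LTerm) : LTerm → LTerm
  | .var y => if y = x then u else .var y
  | .const c => .const c
  | .app t1 t2 => .app (nsubst x u t1) (nsubst x u t2)
  | .lam y t => if y = x then .lam y t else .lam y (nsubst x u t)

/-- αβη-convertibility of λ-terms.  The β-rule carries a capture-freeness side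
condition; arbitrary redexes are handled by first α-converting. -/
inductive Conv : LTerm → LTerm → Prop
  | refl (t) : Conv t t
  | symm {t u} : Conv t u → Conv u t
  | trans {t u v} : Conv t u → Conv u v → Conv t v
  | appc {t t' u u'} : Conv t t' → Conv u u' → Conv (.app t u) (.app t' u')
  | lamc {x t t'} : Conv t t' → Conv (.lam x t) (.lam x t')
  | alpha {t u} : AEq t u → Conv t u
  | beta {x t u} : (∀ v ∈ FVL u, v ∉ bvarsL t) → Conv (.app (.lam x t) u) (nsubst x u t)
  | eta {x t} : x ∉ FVL t → Conv (.lam x (.app t (.var x))) t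

/-- A fresh variable not occurring in a given finite set. -/
def freshVar (s : Finset LVar) : LVar :=
  .inl ((s.image (fun v => match v with | .inl a => a | .inr b => b)).sup id + 1)

/-- Capture-avoiding simultaneous renaming of free variables along `ρ`. -/
def casub (ρ : LVar → LVar) : LTerm → LTerm
  | .var z => .var (ρ z)
  | .const c => .const c
  | .app t u => .app (casub ρ t) (casub ρ u)
  | .lam z t =>
      if h : ∃ w ∈ FVL t, w ≠ z ∧ ρ w = z then
        let z' := freshVar (allVarsL t ∪ (FVL t).image ρ ∪ {z})
        .lam z' (casub ρ (swapL z z' t))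
      else .lam z (casub (fun w => if w = z then z else ρ w) t)
termination_by t => sizeL t
decreasing_by
  all_goals simp_wf
  all_goals simp [swapL, sizeL_renameAll, sizeL]
  all_goals omega

/-! Sorts and simple types -/

/-- Nominal sorts and arities: atom sorts `ν`, data sorts `δ`, abstraction
sorts `⟨ν⟩τ` and arities `τ₁×…×τₙ→δ`. -/
inductive NSort where
  | atom : ℕ → NSort
  | data : ℕ → NSort
  | abs : ℕ → NSort → NSort
  | arr : List NSort → ℕ → NSort

/-- Simple types with one base type per atom sort and per data sort. -/
inductive STy where
  | atomT : ℕ → STy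
  | dataT : ℕ → STy
  | arrT : STy → STy → STy
deriving DecidableEq

/-- The sort-to-type translation `⟦·⟧`. -/
def trSort : NSort → STy
  | .atom n => .atomT n
  | .data n => .dataT n
  | .abs n τ => .arrT (.atomT n) (trSort τ)
  | .arr τs d => τs.attach.foldr (fun τ T => .arrT (trSort τ.1) T) (.dataT d)
decreasing_by
  all_goals simp_wf
  all_goals first
    | (have := List.sizeOf_lt_of_mem τ.2; omega)
    | omega

/-- A sort is basic if it is an atom sort or a data sort. -/
def NSort.isBasic : NSort → Prop
  | .atom _ => True
  | .data _ => True
  | _ => False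

/-- A nominal signature: sorts of atoms, sorts of variables, arities of function symbols. -/
structure Sig where
  sortA : Atom → ℕ
  sortV : Var → NSort
  arF : ℕ → List NSort × ℕ

/-- The sorting judgement for nominal terms. -/
inductive HasSortN (S : Sig) : NTerm → NSort → Prop
  | atom (a) : HasSortN S (.atom a) (.atom (S.sortA a))
  | app {f ts} : ts.length = (S.arF f).1.length →
      (∀ p ∈ ts.zip (S.arF f).1, HasSortN S p.1 p.2) →
      HasSortN S (.app f ts) (.data (S.arF f).2)
  | abs {a t τ} : HasSortN S t τ → HasSortN S (.abs a t) (.abs (S.sortA a) τ)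
  | susp {π X} : (∀ a, S.sortA (permAtom π a) = S.sortA a) →
      HasSortN S (.susp π X) (S.sortV X)

/-! The translation from nominal terms to λ-terms -/

/-- The atoms capturable by `X` under `Δ`: the sublist of `as` of atoms `a` with `a # X ∉ Δ`. -/
def capList (as : List Atom) (Δ : Finset (Atom × Var)) (X : Var) : List Atom :=
  as.filter (fun a => (a, X) ∉ Δ)

/-- The translation `⟦t⟧_Δ` of a nominal term into a λ-term, relative to the
fixed atom list `as` and the freshness environment `Δ`. -/
def trT (as : List Atom) (Δ : Finset (Atom × Var)) : NTerm → LTerm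
  | .atom a => .var (.inl a)
  | .app f ts => appList (.const f) (ts.attach.map (fun t => trT as Δ t.1))
  | .abs a t => .lam (.inl a) (trT as Δ t)
  | .susp π X => appList (.var (.inr X))
      ((capList as Δ X).map (fun b => .var (.inl (permAtom π b))))
decreasing_by
  all_goals simp_wf
  all_goals first
    | (have := List.sizeOf_lt_of_mem t.2; omega)
    | omega

/-- Typing contexts as total functions. -/
abbrev Ctx := LVar → STy

/-- The simply-typed λ-calculus typing judgement. -/
inductive HasTy (cty : ℕ → STy) : Ctx → LTerm → STy → Prop
  | var (Γ : Ctx) (v) : HasTy cty Γ (.var v) (Γ v)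
  | const (Γ : Ctx) (c) : HasTy cty Γ (.const c) (cty c)
  | lam {Γ : Ctx} {x t T U} : HasTy cty (Function.update Γ x T) t U →
      HasTy cty Γ (.lam x t) (.arrT T U)
  | app {Γ : Ctx} {t u T U} : HasTy cty Γ t (.arrT T U) → HasTy cty Γ u T →
      HasTy cty Γ (.app t u) U

/-- Type of the constant translating a function symbol `f : τ₁×…×τₙ→δ`. -/
def ctySig (S : Sig) (f : ℕ) : STy :=
  (S.arF f).1.foldr (fun τ T => .arrT (trSort τ) T) (.dataT (S.arF f).2)

/-- Type assigned to the free variable translating a nominal variable `X`. -/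
def varTy (S : Sig) (as : List Atom) (Δ : Finset (Atom × Var)) (X : Var) : STy :=
  (capList as Δ X).foldr (fun a T => .arrT (.atomT (S.sortA a)) T) (trSort (S.sortV X))

/-- The typing context of the translation: atoms get their atom-sort base type
and nominal variables get the arrow type over their capturable atoms. -/
def trCtx (S : Sig) (as : List Atom) (Δ : Finset (Atom × Var)) : Ctx
  | .inl a => .atomT (S.sortA a)
  | .inr X => varTy S as Δ X

/-! Higher-order patterns -/

/-- `IsPattern B t` : in the scope of bound variables `B`, every free variable of `t`
is applied to a list of pairwise distinct bound variables. -/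
inductive IsPattern : List LVar → LTerm → Prop
  | bvar {B v} : v ∈ B → IsPattern B (.var v)
  | flex {B : List LVar} {X : Var} {args : List LVar} : (.inr X : LVar) ∉ B → (∀ a ∈ args, a ∈ B) → args.Nodup →
      IsPattern B (appList (.var (.inr X)) (args.map .var))
  | rigid {B h ts} : ((∃ c, h = .const c) ∨ (∃ v, h = .var v ∧ v ∈ B)) →
      (∀ t ∈ ts, IsPattern B t) → IsPattern B (appList h ts)
  | lam {B x t} : IsPattern (x :: B) t → IsPattern B (.lam x t)

/-! Unification problems and their translations -/

/-- Constraints of a (general) nominal unification problem. -/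
inductive NConstraint where
  | eq : NTerm → NTerm → NConstraint
  | fr : Atom → NTerm → NConstraint

/-- A nominal unification problem. -/
abbrev NProb := List NConstraint

/-- An equational nominal unification problem: a list of equality equations. -/
abbrev EProb := List (NTerm × NTerm)

/-- `⟨Δ, σ⟩` solves a constraint. -/
def solvesC (Δ : Finset (Atom × Var)) (σ : NSub) : NConstraint → Prop
  | .eq t u => Alpha Δ (applyN σ t) (applyN σ u)
  | .fr a t => Fresh Δ a (applyN σ t)

/-- `⟨Δ, σ⟩` solves a nominal unification problem. -/
def solvesP (Δ : Finset (Atom × Var)) (σ : NSub) (P : NProb) : Prop :=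
  ∀ c ∈ P, solvesC Δ σ c

/-- `⟨Δ, σ⟩` solves an equational nominal unification problem. -/
def solvesE (Δ : Finset (Atom × Var)) (σ : NSub) (P : EProb) : Prop :=
  ∀ e ∈ P, Alpha Δ (applyN σ e.1) (applyN σ e.2)

/-- A problem is equational if it contains no freshness constraints. -/
def isEquational (P : NProb) : Prop := ∀ c ∈ P, ∀ a t, c ≠ .fr a t

def sizeConstraint : NConstraint → ℕ
  | .eq t u => 1 + sizeN t + sizeN u
  | .fr _ t => 2 + sizeN t

def sizeNP (P : NProb) : ℕ := (P.map sizeConstraint).sum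

def sizeEP (P : EProb) : ℕ := (P.map (fun e => 1 + sizeN e.1 + sizeN e.2)).sum

/-- Variables of an equational problem. -/
def varsEP (P : EProb) : Finset Var := (P.map (fun e => nvars e.1 ∪ nvars e.2)).foldr (· ∪ ·) ∅

/-- Atoms of an equational problem. -/
def atomsEP (P : EProb) : Finset Atom := (P.map (fun e => natoms e.1 ∪ natoms e.2)).foldr (· ∪ ·) ∅

/-- Translation of an equation: both sides are translated with the empty
environment and closed under `λa₁…λaₙ`. -/
def trEq (as : List Atom) (e : NTerm × NTerm) : LTerm × LTerm :=
  (lamList (as.map .inl) (trT as ∅ e.1), lamList (as.map .inl) (trT as ∅ e.2))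

/-- Translation of an equational nominal problem into a higher-order problem. -/
def trProb (as : List Atom) (P : EProb) : List (LTerm × LTerm) := P.map (trEq as)

def sizeLP (Q : List (LTerm × LTerm)) : ℕ := (Q.map (fun e => 1 + sizeL e.1 + sizeL e.2)).sum

/-! λ-substitutions -/

/-- λ-substitutions over the (images of) nominal variables, with explicit domain. -/
abbrev LSub := Var → Option LTerm

/-- Domain of a λ-substitution. -/
def domL (σ : LSub) : Set Var := {X | (σ X).isSome}

/-- Application of a λ-substitution.  (In translated problems the values are
closed with respect to atom variables, so no capture can occur.) -/
def applyL (σ : LSub) : LTerm → LTerm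
  | .var (.inr X) => (σ X).getD (.var (.inr X))
  | .var v => .var v
  | .const c => .const c
  | .lam x t => .lam x (applyL σ t)
  | .app t u => .app (applyL σ t) (applyL σ u)

/-- `σ` solves a higher-order problem up to αβη. -/
def solvesL (σ : LSub) (Q : List (LTerm × LTerm)) : Prop :=
  ∀ e ∈ Q, Conv (applyL σ e.1) (applyL σ e.2)

/-- The translation `⟦σ⟧_Δ` of a nominal substitution. -/
def trSub (as : List Atom) (Δ : Finset (Atom × Var)) (σ : NSub) : LSub :=
  fun X => (σ X).map (fun t => lamList (as.map .inl) (trT as Δ t))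

/-! The reverse translation -/

/-- The reverse translation relation from λ-terms to nominal terms
(nondeterministic because of the choice of the permutation `π`). -/
inductive RevTr (as : List Atom) (Δ : Finset (Atom × Var)) : LTerm → NTerm → Prop
  | atom (a) : RevTr as Δ (.var (.inl a)) (.atom a)
  | appf {f ts us} : ts.length = us.length → (∀ p ∈ ts.zip us, RevTr as Δ p.1 p.2) →
      RevTr as Δ (appList (.const f) ts) (.app f us)
  | lam {a t u} : RevTr as Δ t u → RevTr as Δ (.lam (.inl a) t) (.abs a u)
  | susp {X : Var} {π : Perm0} {cs : List Atom} : (∀ a ∉ as, permAtom π a = a) →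
      cs.map (permAtom π) = capList as Δ X →
      RevTr as Δ (appList (.var (.inr X)) (cs.map (fun c => .var (.inl c))))
        (.susp π.reverse X)

/-- β-reduce the application of a λ-term to the atom variables `as`. -/
def applyAtoms : LTerm → List Atom → LTerm
  | .lam x t, a :: rest => applyAtoms (nsubst x (.var (.inl a)) t) rest
  | t, rest => appList t (rest.map (fun a => .var (.inl a)))

/-! "More general" relations on unifiers -/

/-- `Δ₂ ⊢ σ'(Δ₁)` : every freshness constraint of `Δ₁` holds after applying `σ'`. -/
def freshEnvHolds (Δ₂ : Finset (Atom × Var)) (σ' : NSub) (Δ₁ : Finset (Atom × Var)) : Prop :=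
  ∀ p ∈ Δ₁, Fresh Δ₂ p.1 (applyN σ' (nsuspV p.2))

/-- `⟨Δ₁,σ₁⟩` is more general than `⟨Δ₂,σ₂⟩`. -/
def moreGeneralN (Δ₁ : Finset (Atom × Var)) (σ₁ : NSub)
    (Δ₂ : Finset (Atom × Var)) (σ₂ : NSub) : Prop :=
  ∃ σ' : NSub, freshEnvHolds Δ₂ σ' Δ₁ ∧
    ∀ X ∈ domN σ₁ ∪ domN σ₂,
      Alpha Δ₂ (applyN σ' (applyN σ₁ (nsuspV X))) (applyN σ₂ (nsuspV X))

/-- A λ-substitution `σ₁` is more general than `σ₂` (modulo αβη). -/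
def moreGeneralL (σ₁ σ₂ : LSub) : Prop :=
  ∃ σ' : LSub, ∀ X ∈ domL σ₁ ∪ domL σ₂,
    Conv (applyL σ' (applyL σ₁ (.var (.inr X)))) (applyL σ₂ (.var (.inr X)))


/-!
Both sides are compared through locally nameless representations, in which α-equivalent
λ-terms become equal. The translation turns the swapping `(a b)` into the λ-level swapping
and `Δ ⊢ a # t` into "`a` is not free in `⟦t⟧_Δ`", so each rule of `Alpha` becomes an
equation between representations. Conversely, the representation of `⟦t⟧_Δ` determines the
outermost constructor of `t`, and since all atoms lie in `as`, an atom not free in `⟦u⟧_Δ` is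
fresh for `u`, and two suspensions of `X` with equal translations can disagree only on atoms
that `Δ` declares fresh for `X`.
-/

/-- Locally nameless λ-terms: bound variables are de Bruijn indices, free ones keep their names. -/
inductive DB where
  | bvar : ℕ → DB
  | fvar : LVar → DB
  | const : ℕ → DB
  | lam : DB → DB
  | app : DB → DB → DB

namespace DB

def fv : DB → Finset LVar
  | bvar _ => ∅
  | fvar v => {v}
  | const _ => ∅
  | lam D => fv D
  | app D E => fv D ∪ fv E

def mapFree (f : LVar → LVar) : DB → DB
  | bvar i => bvar i
  | fvar v => fvar (f v)
  | const c => const c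
  | lam D => lam (mapFree f D)
  | app D E => app (mapFree f D) (mapFree f E)

def closeAt (k : ℕ) (x : LVar) : DB → DB
  | bvar i => bvar i
  | fvar v => if v = x then bvar k else fvar v
  | const c => const c
  | lam D => lam (closeAt (k + 1) x D)
  | app D E => app (closeAt k x D) (closeAt k x E)

def openAt (k : ℕ) (z : LVar) : DB → DB
  | bvar i => if i = k then fvar z else bvar i
  | fvar v => fvar v
  | const c => const c
  | lam D => lam (openAt (k + 1) z D)
  | app D E => app (openAt k z D) (openAt k z E)

def BVarsLT (k : ℕ) : DB → Prop
  | bvar i => i < k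
  | fvar _ => True
  | const _ => True
  | lam D => BVarsLT (k + 1) D
  | app D E => BVarsLT k D ∧ BVarsLT k E

theorem mapFree_congr {f g : LVar → LVar} {D : DB} (h : ∀ v ∈ fv D, f v = g v) :
    mapFree f D = mapFree g D := by
  induction D with
  | app D E ihD ihE =>
    simp only [fv, Finset.mem_union] at h
    simp only [mapFree, ihD fun v hv => h v (.inl hv), ihE fun v hv => h v (.inr hv)]
  | _ => simp_all [mapFree, fv]

theorem mapFree_eq_self {f : LVar → LVar} {D : DB} (h : ∀ v ∈ fv D, f v = v) :
    mapFree f D = D := by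
  induction D with
  | app D E ihD ihE =>
    simp only [fv, Finset.mem_union] at h
    simp only [mapFree, ihD fun v hv => h v (.inl hv), ihE fun v hv => h v (.inr hv)]
  | _ => simp_all [mapFree, fv]

theorem fv_closeAt (k : ℕ) (x : LVar) (D : DB) : fv (closeAt k x D) = (fv D).erase x := by
  induction D generalizing k with
  | fvar v =>
    by_cases hv : v = x
    · simp [closeAt, fv, hv]
    · simp [closeAt, fv, hv, Finset.erase_eq_of_notMem, Ne.symm hv]
  | app D E ihD ihE => simp [closeAt, fv, ihD, ihE, Finset.erase_union_distrib]
  | _ => simp [closeAt, fv, *]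

theorem BVarsLT.closeAt {k : ℕ} {D : DB} (h : BVarsLT k D) (x : LVar) :
    BVarsLT (k + 1) (closeAt k x D) := by
  induction D generalizing k with
  | bvar i => exact Nat.lt_succ_of_lt h
  | fvar v => by_cases hv : v = x <;> simp [DB.closeAt, BVarsLT, hv]
  | const c => trivial
  | lam D ih => exact ih h
  | app D E ihD ihE => exact ⟨ihD h.1, ihE h.2⟩

theorem closeAt_mapFree {f : LVar → LVar} (hf : Function.Injective f) (k : ℕ) (x : LVar)
    (D : DB) : closeAt k (f x) (mapFree f D) = mapFree f (closeAt k x D) := by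
  induction D generalizing k with
  | fvar v => by_cases hv : v = x <;> simp [mapFree, DB.closeAt, hv, hf.ne_iff]
  | _ => simp [mapFree, DB.closeAt, *]

theorem openAt_closeAt {k : ℕ} {D : DB} (h : BVarsLT k D) (x : LVar) :
    openAt k x (closeAt k x D) = D := by
  induction D generalizing k with
  | bvar i => simp [DB.closeAt, openAt, Nat.ne_of_lt (show i < k from h)]
  | fvar v => by_cases hv : v = x <;> simp [DB.closeAt, openAt, hv]
  | const c => rfl
  | lam D ih => simp only [DB.closeAt, openAt, ih h]
  | app D E ihD ihE => simp only [DB.closeAt, openAt, ihD h.1, ihE h.2]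

theorem openAt_closeAt_eq_mapFree {k : ℕ} {D : DB} (h : BVarsLT k D) (x z : LVar) :
    openAt k z (closeAt k x D) = mapFree (fun v => if v = x then z else v) D := by
  induction D generalizing k with
  | bvar i => simp [DB.closeAt, openAt, mapFree, Nat.ne_of_lt (show i < k from h)]
  | fvar v => by_cases hv : v = x <;> simp [DB.closeAt, openAt, mapFree, hv]
  | const c => rfl
  | lam D ih => simp only [DB.closeAt, openAt, mapFree, ih h]
  | app D E ihD ihE => simp only [DB.closeAt, openAt, mapFree, ihD h.1, ihE h.2]

theorem not_mem_fv_of_closeAt_eq {k : ℕ} {x y : LVar} {D E : DB} (hxy : x ≠ y)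
    (h : closeAt k x D = closeAt k y E) : x ∉ fv E := fun hx => by
  have hfv := congrArg fv h
  rw [fv_closeAt, fv_closeAt] at hfv
  simpa [← hfv] using Finset.mem_erase.mpr ⟨hxy, hx⟩

def spine : DB → DB × List DB
  | app D E => ((spine D).1, (spine D).2 ++ [E])
  | D => (D, [])

theorem spine_foldl_app {h : DB} (hh : ∀ D E, h ≠ app D E) (l : List DB) :
    spine (l.foldl app h) = (h, l) := by
  induction l using List.reverseRecOn with
  | nil => cases h <;> first | rfl | exact absurd rfl (hh _ _)
  | append_singleton l E ih => simp [spine, ih]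

end DB

namespace LTerm

def toDB : LTerm → DB
  | var v => .fvar v
  | const c => .const c
  | lam x t => .lam (DB.closeAt 0 x (toDB t))
  | app t u => .app (toDB t) (toDB u)

theorem bvarsLT_toDB (t : LTerm) : DB.BVarsLT 0 (toDB t) := by
  induction t with
  | lam x t ih => exact ih.closeAt x
  | app t u iht ihu => exact ⟨iht, ihu⟩
  | _ => trivial

theorem fv_toDB (t : LTerm) : DB.fv (toDB t) = FVL t := by
  induction t with
  | lam x t ih => simp [toDB, DB.fv, DB.fv_closeAt, ih, FVL]
  | _ => simp [toDB, DB.fv, FVL, *]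

theorem toDB_renameAll {f : LVar → LVar} (hf : Function.Injective f) (t : LTerm) :
    toDB (renameAll f t) = DB.mapFree f (toDB t) := by
  induction t with
  | lam x t ih => simp [renameAll, toDB, DB.mapFree, ih, DB.closeAt_mapFree hf]
  | _ => simp [renameAll, toDB, DB.mapFree, *]

theorem toDB_appList (h : LTerm) (ts : List LTerm) :
    toDB (appList h ts) = (ts.map toDB).foldl .app (toDB h) := by
  induction ts generalizing h with
  | nil => rfl
  | cons t ts ih => exact ih (.app h t)

end LTerm

open LTerm

theorem FVL_subset_allVarsL (t : LTerm) : FVL t ⊆ allVarsL t := by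
  induction t with
  | lam x t ih => exact (Finset.erase_subset _ _).trans (ih.trans (Finset.subset_insert _ _))
  | app t u iht ihu => exact Finset.union_subset_union iht ihu
  | _ => simp [FVL, allVarsL]

theorem varMap_comm (x y : LVar) : varMap x y = varMap y x := by
  funext z; unfold varMap; split_ifs <;> simp_all

theorem varMap_injective (x y : LVar) : Function.Injective (varMap x y) :=
  Function.Involutive.injective fun z => by unfold varMap; split_ifs <;> simp_all

theorem swapL_comm (x y : LVar) (t : LTerm) : swapL x y t = swapL y x t := by
  rw [swapL, swapL, varMap_comm]

theorem openAt_closeAt_toDB {x z : LVar} {t : LTerm} (hz : z ∉ FVL t) :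
    DB.openAt 0 z (DB.closeAt 0 x (toDB t)) = toDB (swapL x z t) := by
  rw [DB.openAt_closeAt_eq_mapFree (bvarsLT_toDB t), swapL, toDB_renameAll (varMap_injective x z)]
  refine DB.mapFree_congr fun v hv => ?_
  have hvz : v ≠ z := by rintro rfl; exact hz (fv_toDB t ▸ hv)
  simp [varMap, hvz]

theorem toDB_lam_swapL {x z : LVar} {t : LTerm} (hz : z ∉ FVL t) :
    toDB (.lam z (swapL x z t)) = toDB (.lam x t) := by
  simp only [toDB, swapL, toDB_renameAll (varMap_injective x z)]
  congr 1
  calc DB.closeAt 0 z (DB.mapFree (varMap x z) (toDB t))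
      = DB.closeAt 0 (varMap x z x) (DB.mapFree (varMap x z) (toDB t)) := by simp [varMap]
    _ = DB.mapFree (varMap x z) (DB.closeAt 0 x (toDB t)) :=
      DB.closeAt_mapFree (varMap_injective x z) 0 x _
    _ = DB.closeAt 0 x (toDB t) := DB.mapFree_eq_self fun v hv => ?_
  rw [DB.fv_closeAt, fv_toDB, Finset.mem_erase] at hv
  have hvz : v ≠ z := by rintro rfl; exact hz hv.2
  simp [varMap, hv.1, hvz]

theorem AEq.toDB_eq {t u : LTerm} (h : AEq t u) : toDB t = toDB u := by
  induction h with
  | var v => rfl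
  | const c => rfl
  | app _ _ iht ihu => simp only [toDB, iht, ihu]
  | @lam x y t u z hzt hzu _ _ _ ih =>
    have hzt' : z ∉ FVL t := fun h => hzt (FVL_subset_allVarsL t h)
    have hzu' : z ∉ FVL u := fun h => hzu (FVL_subset_allVarsL u h)
    rw [← toDB_lam_swapL hzt', ← toDB_lam_swapL hzu']
    simp only [toDB, ih]

theorem AEq.of_toDB_eq : {t u : LTerm} → toDB t = toDB u → AEq t u
  | .var v, .var w, h => by cases h; exact .var v
  | .const c, .const d, h => by cases h; exact .const c
  | .app t₁ t₂, .app u₁ u₂, h => by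
    simp only [toDB, DB.app.injEq] at h
    exact .app (of_toDB_eq h.1) (of_toDB_eq h.2)
  | .lam x t, .lam y u, h => by
    obtain ⟨z, hz⟩ : ∃ z, z ∉ allVarsL t ∪ allVarsL u ∪ {x, y} :=
      Infinite.exists_notMem_finset _
    simp only [Finset.mem_union, Finset.mem_insert, Finset.mem_singleton, not_or] at hz
    obtain ⟨⟨hzt, hzu⟩, hzx, hzy⟩ := hz
    refine .lam z hzt hzu hzx hzy (of_toDB_eq ?_)
    simp only [toDB, DB.lam.injEq] at h
    rw [← openAt_closeAt_toDB fun h => hzt (FVL_subset_allVarsL t h),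
      ← openAt_closeAt_toDB fun h => hzu (FVL_subset_allVarsL u h), h]
  | .var _, .const _, h | .var _, .lam _ _, h | .var _, .app _ _, h
  | .const _, .var _, h | .const _, .lam _ _, h | .const _, .app _ _, h
  | .lam _ _, .var _, h | .lam _ _, .const _, h | .lam _ _, .app _ _, h
  | .app _ _, .var _, h | .app _ _, .const _, h | .app _ _, .lam _ _, h => by cases h
termination_by t => sizeL t
decreasing_by all_goals simp only [sizeL, swapL, sizeL_renameAll]; omega

theorem AEq_iff_toDB_eq {t u : LTerm} : AEq t u ↔ t.toDB = u.toDB :=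
  ⟨AEq.toDB_eq, AEq.of_toDB_eq⟩

theorem List.map_eq_map_iff_zip {α β : Type*} {f : α → β} {l₁ l₂ : List α} :
    l₁.map f = l₂.map f ↔ l₁.length = l₂.length ∧ ∀ p ∈ l₁.zip l₂, f p.1 = f p.2 := by
  rw [← List.forall₂_eq_eq_eq, List.forall₂_map_left_iff, List.forall₂_map_right_iff,
    List.forall₂_iff_zip, Prod.forall]

theorem swapAtom_swapAtom (a b c : Atom) : swapAtom a b (swapAtom a b c) = c := by
  unfold swapAtom; split_ifs <;> simp_all

theorem permAtom_append (π₁ π₂ : Perm0) (a : Atom) :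
    permAtom (π₁ ++ π₂) a = permAtom π₁ (permAtom π₂ a) := by
  simp [permAtom, List.foldr_append]

theorem permAtom_reverse_permAtom (π : Perm0) (a : Atom) :
    permAtom π.reverse (permAtom π a) = a := by
  induction π generalizing a with
  | nil => rfl
  | cons p π ih =>
    rw [List.reverse_cons, permAtom_append]
    exact (congrArg _ (swapAtom_swapAtom p.1 p.2 _)).trans (ih a)

theorem permAtom_permAtom_reverse (π : Perm0) (a : Atom) :
    permAtom π (permAtom π.reverse a) = a := by
  simpa using permAtom_reverse_permAtom π.reverse a

theorem permAtom_eq_self_of_not_mem {π : Perm0} {s : Finset Atom}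
    (hπ : ∀ p ∈ π, p.1 ∈ s ∧ p.2 ∈ s) {a : Atom} (ha : a ∉ s) : permAtom π a = a := by
  induction π with
  | nil => rfl
  | cons p π ih =>
    have hp := hπ p List.mem_cons_self
    change swapAtom p.1 p.2 (permAtom π a) = a
    rw [ih fun q hq => hπ q (List.mem_cons_of_mem p hq), swapAtom,
      if_neg (ne_of_mem_of_not_mem hp.1 ha).symm, if_neg (ne_of_mem_of_not_mem hp.2 ha).symm]

theorem permAtom_mem {π : Perm0} {s : Finset Atom} (hπ : ∀ p ∈ π, p.1 ∈ s ∧ p.2 ∈ s)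
    {a : Atom} (ha : a ∈ s) : permAtom π a ∈ s := by
  induction π with
  | nil => exact ha
  | cons p π ih =>
    have hp := hπ p List.mem_cons_self
    change swapAtom p.1 p.2 (permAtom π a) ∈ s
    have hb := ih fun q hq => hπ q (List.mem_cons_of_mem p hq)
    generalize permAtom π a = b at hb
    unfold swapAtom; split_ifs
    exacts [hp.2, hp.1, hb]

/-- The recursor of the nested inductive `NTerm` has a separate motive for `List NTerm`;
this is the induction principle one actually wants. -/
theorem NTerm.induction {P : NTerm → Prop} (atom : ∀ a, P (.atom a))
    (app : ∀ f ts, (∀ t ∈ ts, P t) → P (.app f ts)) (abs : ∀ a t, P t → P (.abs a t))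
    (susp : ∀ π X, P (.susp π X)) : ∀ t, P t
  | .atom a => atom a
  | .app f ts => app f ts fun t _ => NTerm.induction atom app abs susp t
  | .abs a t => abs a t (NTerm.induction atom app abs susp t)
  | .susp π X => susp π X

@[simp] theorem mem_natoms_app {x : Atom} {f : ℕ} {ts : List NTerm} :
    x ∈ natoms (.app f ts) ↔ ∃ t ∈ ts, x ∈ natoms t := by
  rw [natoms, List.foldr_attach (f := fun t s => natoms t ∪ s)]
  induction ts with
  | nil => simp
  | cons t ts ih => simp [ih]

@[simp] theorem natoms_abs (a : Atom) (t : NTerm) : natoms (.abs a t) = insert a (natoms t) := by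
  rw [natoms]

@[simp] theorem mem_natoms_susp {x : Atom} {π : Perm0} {X : Var} :
    x ∈ natoms (.susp π X) ↔ ∃ p ∈ π, x = p.1 ∨ x = p.2 := by
  rw [natoms]
  induction π with
  | nil => simp
  | cons p π ih => simp [ih, or_assoc]

theorem natoms_susp_subset_iff {π : Perm0} {X : Var} {s : Finset Atom} :
    natoms (.susp π X) ⊆ s ↔ ∀ p ∈ π, p.1 ∈ s ∧ p.2 ∈ s := by
  simp only [Finset.subset_iff, mem_natoms_susp]
  grind

@[simp] theorem permTerm_app (π : Perm0) (f : ℕ) (ts : List NTerm) :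
    permTerm π (.app f ts) = .app f (ts.map (permTerm π)) := by
  rw [permTerm, List.attach_map_val]

theorem natoms_permTerm_subset {π : Perm0} {s : Finset Atom} (hπ : ∀ p ∈ π, p.1 ∈ s ∧ p.2 ∈ s)
    (u : NTerm) (hu : natoms u ⊆ s) : natoms (permTerm π u) ⊆ s := by
  induction u using NTerm.induction with
  | atom a =>
    simpa [permTerm, natoms] using permAtom_mem hπ (hu (by simp [natoms]))
  | app f ts ih =>
    intro x hx
    simp only [permTerm_app, mem_natoms_app, List.mem_map] at hx
    obtain ⟨_, ⟨t, ht, rfl⟩, hx⟩ := hx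
    exact ih t ht (fun y hy => hu (mem_natoms_app.mpr ⟨t, ht, hy⟩)) hx
  | abs a t ih =>
    rw [natoms_abs, Finset.insert_subset_iff] at hu
    rw [permTerm, natoms_abs, Finset.insert_subset_iff]
    exact ⟨permAtom_mem hπ hu.1, ih hu.2⟩
  | susp π' X =>
    rw [natoms_susp_subset_iff] at hu
    rw [permTerm, natoms_susp_subset_iff, List.forall_mem_append]
    exact ⟨hπ, hu⟩

theorem natoms_swapTerm_subset {a b : Atom} {s : Finset Atom} (ha : a ∈ s) (hb : b ∈ s)
    {u : NTerm} (hu : natoms u ⊆ s) : natoms (swapTerm a b u) ⊆ s :=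
  natoms_permTerm_subset (by simpa using ⟨ha, hb⟩) u hu

@[simp] theorem trT_app (as : List Atom) (Δ : Finset (Atom × Var)) (f : ℕ) (ts : List NTerm) :
    trT as Δ (.app f ts) = appList (.const f) (ts.map (trT as Δ)) := by
  rw [trT, List.attach_map_val]

theorem renameAll_appList (f : LVar → LVar) (h : LTerm) (ts : List LTerm) :
    renameAll f (appList h ts) = appList (renameAll f h) (ts.map (renameAll f)) := by
  induction ts generalizing h with
  | nil => rfl
  | cons t ts ih => exact ih (.app h t)

theorem trT_permTerm (as : List Atom) (Δ : Finset (Atom × Var)) (π : Perm0) (u : NTerm) :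
    trT as Δ (permTerm π u) = renameAll (Sum.map (permAtom π) id) (trT as Δ u) := by
  induction u using NTerm.induction with
  | atom a => simp [permTerm, trT, renameAll]
  | app f ts ih =>
    simp only [permTerm_app, trT_app, renameAll_appList, List.map_map]
    exact congrArg _ (List.map_congr_left ih)
  | abs a t ih => simp [permTerm, trT, renameAll, ih]
  | susp π' X =>
    simp only [permTerm, trT, renameAll_appList, List.map_map]
    congr 1
    exact List.map_congr_left fun b _ => by simp [renameAll, permAtom_append]

theorem trT_swapTerm (as : List Atom) (Δ : Finset (Atom × Var)) (a b : Atom) (u : NTerm) :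
    trT as Δ (swapTerm a b u) = swapL (.inl a) (.inl b) (trT as Δ u) := by
  rw [swapTerm, trT_permTerm, swapL]
  congr 1
  funext v
  rcases v with c | X
  · simp only [Sum.map_inl, permAtom, List.foldr, swapAtom, varMap]
    split_ifs <;> simp_all [apply_ite]
  · simp [varMap]

theorem mem_FVL_appList {v : LVar} {h : LTerm} {ts : List LTerm} :
    v ∈ FVL (appList h ts) ↔ v ∈ FVL h ∨ ∃ t ∈ ts, v ∈ FVL t := by
  induction ts generalizing h with
  | nil => simp [appList]
  | cons t ts ih =>
    rw [appList, List.foldl_cons, ← appList, ih]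
    simp only [FVL, Finset.mem_union, List.mem_cons, exists_eq_or_imp]
    tauto

theorem mem_capList {as : List Atom} {Δ : Finset (Atom × Var)} {X : Var} {b : Atom} :
    b ∈ capList as Δ X ↔ b ∈ as ∧ (b, X) ∉ Δ := by
  simp [capList]

theorem Fresh.not_mem_FVL_trT (as : List Atom) {Δ : Finset (Atom × Var)} {a : Atom}
    {u : NTerm} (h : Fresh Δ a u) : .inl a ∉ FVL (trT as Δ u) := by
  induction h with
  | atom hne => simpa [trT, FVL] using hne
  | @susp π X hmem =>
    simp only [trT, mem_FVL_appList, FVL, List.mem_map, mem_capList]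
    rintro (h | ⟨_, ⟨c, ⟨-, hc⟩, rfl⟩, h⟩)
    · simp at h
    · refine hc ?_
      simp only [FVL, Finset.mem_singleton, Sum.inl.injEq] at h
      rwa [h, permAtom_reverse_permAtom] at hmem
  | app _ ih =>
    simp only [trT_app, mem_FVL_appList, FVL, List.mem_map]
    rintro (h | ⟨_, ⟨s, hs, rfl⟩, h⟩)
    · simp at h
    · exact ih s hs h
  | abs1 => simp [trT, FVL]
  | abs2 _ _ ih => simp [trT, FVL, ih]

theorem fresh_of_not_mem_FVL_trT {as : List Atom} {Δ : Finset (Atom × Var)} {a : Atom}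
    (ha : a ∈ as) {u : NTerm} (hu : natoms u ⊆ as.toFinset) (h : .inl a ∉ FVL (trT as Δ u)) :
    Fresh Δ a u := by
  induction u using NTerm.induction with
  | atom a' => exact .atom (by simpa [trT, FVL] using h)
  | app f ts ih =>
    refine .app fun t ht => ih t ht (fun x hx => hu (mem_natoms_app.mpr ⟨t, ht, hx⟩)) ?_
    simp only [trT_app, mem_FVL_appList, List.mem_map, not_or, not_exists, not_and] at h
    exact h.2 _ ⟨t, ht, rfl⟩
  | abs a' t ih =>
    rw [natoms_abs, Finset.insert_subset_iff] at hu
    by_cases haa : a = a'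
    · exact haa ▸ .abs1
    · exact .abs2 haa (ih hu.2 (by simpa [trT, FVL, haa] using h))
  | susp π X =>
    refine .susp (by_contra fun hX => h ?_)
    have hπ : ∀ p ∈ π.reverse, p.1 ∈ as.toFinset ∧ p.2 ∈ as.toFinset := fun p hp =>
      natoms_susp_subset_iff.mp hu p (List.mem_reverse.mp hp)
    have hcap : permAtom π.reverse a ∈ capList as Δ X :=
      mem_capList.mpr ⟨List.mem_toFinset.mp (permAtom_mem hπ (List.mem_toFinset.mpr ha)), hX⟩
    simp only [trT, mem_FVL_appList, List.mem_map]
    exact .inr ⟨_, ⟨_, hcap, rfl⟩, by simp [FVL, permAtom_permAtom_reverse]⟩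

section Translation

variable (as : List Atom) (Δ : Finset (Atom × Var))

theorem spine_toDB_trT_atom (a : Atom) :
    (toDB (trT as Δ (.atom a))).spine = (.fvar (.inl a), []) := by
  simp [trT, toDB, DB.spine]

theorem spine_toDB_trT_app (f : ℕ) (ts : List NTerm) :
    (toDB (trT as Δ (.app f ts))).spine = (.const f, ts.map fun t => toDB (trT as Δ t)) := by
  rw [trT_app, toDB_appList, DB.spine_foldl_app (by simp [toDB]), List.map_map]
  rfl

theorem spine_toDB_trT_abs (a : Atom) (t : NTerm) :
    (toDB (trT as Δ (.abs a t))).spine =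
      (.lam (DB.closeAt 0 (.inl a) (toDB (trT as Δ t))), []) := by
  simp [trT, toDB, DB.spine]

theorem spine_toDB_trT_susp (π : Perm0) (X : Var) :
    (toDB (trT as Δ (.susp π X))).spine =
      (.fvar (.inr X), (capList as Δ X).map fun b => .fvar (.inl (permAtom π b))) := by
  rw [trT, toDB_appList, DB.spine_foldl_app (by simp [toDB]), List.map_map]
  rfl

end Translation

theorem Alpha.toDB_trT_eq (as : List Atom) {Δ : Finset (Atom × Var)} {t u : NTerm}
    (h : Alpha Δ t u) : toDB (trT as Δ t) = toDB (trT as Δ u) := by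
  induction h with
  | atom a => rfl
  | @susp π π' X hΔ =>
    simp only [trT]
    congr 2
    refine List.map_congr_left fun b hb => ?_
    rw [not_imp_comm.mp (hΔ b) (mem_capList.mp hb).2]
  | @app f ts us hl _ ih =>
    simp only [trT_app, toDB_appList, List.map_map]
    exact congrArg _ (List.map_eq_map_iff_zip.mpr ⟨hl, ih⟩)
  | abs1 _ ih => simp only [trT, toDB, ih]
  | @abs2 a b t u _ _ hfresh ih =>
    rw [trT_swapTerm, swapL_comm] at ih
    simp only [trT]
    rw [← toDB_lam_swapL (hfresh.not_mem_FVL_trT as)]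
    simp only [toDB, ih]

theorem Alpha.of_toDB_trT_eq {as : List Atom} {Δ : Finset (Atom × Var)} {t u : NTerm}
    (ht : natoms t ⊆ as.toFinset) (hu : natoms u ⊆ as.toFinset)
    (h : toDB (trT as Δ t) = toDB (trT as Δ u)) : Alpha Δ t u := by
  -- comparing spines closes the cases where `t` and `u` have different outermost constructors
  induction t using NTerm.induction generalizing u <;> cases u <;>
    have hs := congrArg DB.spine h <;>
    simp only [spine_toDB_trT_atom, spine_toDB_trT_app, spine_toDB_trT_abs, spine_toDB_trT_susp,
      Prod.mk.injEq, reduceCtorEq, false_and, and_true, DB.fvar.injEq, DB.const.injEq,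
      DB.lam.injEq, Sum.inl.injEq, Sum.inr.injEq] at hs
  case atom.atom a a' => exact hs ▸ .atom a
  case app.app f ts ih f' us =>
    obtain ⟨rfl, hargs⟩ := hs
    obtain ⟨hl, hz⟩ := List.map_eq_map_iff_zip.mp hargs
    refine .app hl fun p hp => ?_
    have hmem := List.of_mem_zip hp
    exact ih p.1 hmem.1 (fun x hx => ht (mem_natoms_app.mpr ⟨_, hmem.1, hx⟩))
      (fun x hx => hu (mem_natoms_app.mpr ⟨_, hmem.2, hx⟩)) (hz p hp)
  case abs.abs a t ih b u =>
    rw [natoms_abs, Finset.insert_subset_iff] at ht hu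
    have hlc := bvarsLT_toDB (trT as Δ t)
    by_cases hab : a = b
    · subst hab
      have hopen := congrArg (DB.openAt 0 (.inl a)) hs
      rw [DB.openAt_closeAt hlc, DB.openAt_closeAt (bvarsLT_toDB _)] at hopen
      exact .abs1 (ih ht.2 hu.2 hopen)
    · have hfree : .inl a ∉ FVL (trT as Δ u) :=
        fv_toDB (trT as Δ u) ▸ DB.not_mem_fv_of_closeAt_eq (by simpa using hab) hs
      have hopen := congrArg (DB.openAt 0 (.inl a)) hs
      rw [DB.openAt_closeAt hlc, openAt_closeAt_toDB hfree, swapL_comm, ← trT_swapTerm] at hopen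
      exact .abs2 hab (ih ht.2 (natoms_swapTerm_subset ht.1 hu.1 hu.2) hopen)
        (fresh_of_not_mem_FVL_trT (List.mem_toFinset.mp ht.1) hu.2 hfree)
  case susp.susp π X π' X' =>
    obtain ⟨rfl, hargs⟩ := hs
    refine .susp fun c hne => by_contra fun hcX => hne ?_
    by_cases hc : c ∈ as
    · simpa using List.map_inj_left.mp hargs c (mem_capList.mpr ⟨hc, hcX⟩)
    · have hc' : c ∉ as.toFinset := by simpa using hc
      rw [permAtom_eq_self_of_not_mem (natoms_susp_subset_iff.mp ht) hc',
        permAtom_eq_self_of_not_mem (natoms_susp_subset_iff.mp hu) hc']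

theorem statement14_general (as : List Atom)
    (Δ : Finset (Atom × Var)) (t u : NTerm)
    (ht : natoms t ⊆ as.toFinset) (hu : natoms u ⊆ as.toFinset) :
    Alpha Δ t u ↔ AEq (trT as Δ t) (trT as Δ u) := by
  rw [AEq_iff_toDB_eq]
  exact ⟨Alpha.toDB_trT_eq as, Alpha.of_toDB_trT_eq ht hu⟩

/-- `Δ ⊢ t ≈ u` is derivable iff the translated λ-terms
`⟦t⟧_Δ` and `⟦u⟧_Δ` are α-equivalent. -/
theorem statement14 (as : List Atom) (hnd : as.Nodup)
    (Δ : Finset (Atom × Var)) (t u : NTerm)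
    (ht : natoms t ⊆ as.toFinset) (hu : natoms u ⊆ as.toFinset) :
    Alpha Δ t u ↔ AEq (trT as Δ t) (trT as Δ u) :=
  statement14_general as Δ t u ht hu
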